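/- arXiv:1909.03162 — 7 statements merged into one kernel-verified Lean document; each statement's English description precedes it below -/
import Mathlib

section
/- Let ≻ be a preference over a finite set A of alternatives, let x,y ∈ A be distinct, and let δ ≥ 0 be an integer. Then there exists a preference ≻' over A with d_KT(≻,≻') ≤ δ and y ≻' x if and only if y ≻ x or rank(≻,y) − rank(≻,x) ≤ δ. -/
open Finset

abbrev Pref (A : Type*) [Fintype A] := A ≃ Fin (Fintype.card A)

def prefers {A : Type*} [Fintype A] (p : Pref A) (x y : A) : Prop := p x < p y

instance {A : Type*} [Fintype A] (p : Pref A) (x y : A) : Decidable (prefers p x y) := by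
  unfold prefers; infer_instance

def rank {A : Type*} [Fintype A] (p : Pref A) (a : A) : ℕ := (p a : ℕ) + 1

def dKT {A : Type*} [Fintype A] (p q : Pref A) : ℕ :=
  (univ.filter (fun z : A × A => prefers p z.1 z.2 ∧ prefers q z.2 z.1)).card

def margin {A : Type*} [Fintype A] {n : ℕ} (P : Fin n → Pref A) (x y : A) : ℤ :=
  ((univ.filter (fun i => prefers (P i) x y)).card : ℤ) -
  ((univ.filter (fun i => prefers (P i) y x)).card : ℤ)

def Sk {A : Type*} [Fintype A] {n : ℕ} (k : ℕ) (P : Fin n → Pref A) (a : A) : ℕ :=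
  (univ.filter (fun i => ((P i) a : ℕ) < k)).card

noncomputable def buckLevel {A : Type*} [Fintype A] {n : ℕ} (P : Fin n → Pref A) : ℕ :=
  sInf {k : ℕ | ∃ a : A, n < 2 * Sk k P a}

def movePerm : {m : ℕ} → Fin m → Fin m → Equiv.Perm (Fin m)
  | 0, i, _ => i.elim0
  | _ + 1, i, j => (finSuccEquiv' i).trans (finSuccEquiv' j).symm

def RS {A : Type*} [Fintype A] (p : Pref A) (a : A) (k : ℕ) : Pref A :=
  p.trans (movePerm (p a) ⟨min ((p a : ℕ) + k) (Fintype.card A - 1),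
    lt_of_le_of_lt (min_le_right _ _) (Nat.sub_lt (Fin.pos (p a)) one_pos)⟩)

def LS {A : Type*} [Fintype A] (p : Pref A) (a : A) (k : ℕ) : Pref A :=
  p.trans (movePerm (p a) ⟨(p a : ℕ) - k,
    lt_of_le_of_lt (Nat.sub_le _ _) (p a).isLt⟩)

def feasSet {A : Type*} [Fintype A] [DecidableEq A] (p : Pref A) (δ : ℕ) : Finset (Pref A) :=
  univ.filter (fun q => dKT p q ≤ δ)

lemma dKT_self {A : Type*} [Fintype A] (p : Pref A) : dKT p p = 0 := by
  rw [dKT, Finset.card_eq_zero, Finset.filter_eq_empty_iff]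
  rintro z -
  rintro ⟨h1, h2⟩
  exact absurd ((show p z.1 < p z.2 from h1).trans h2) (lt_irrefl _)

lemma feasSet_nonempty {A : Type*} [Fintype A] [DecidableEq A] (p : Pref A) (δ : ℕ) :
    (feasSet p δ).Nonempty :=
  ⟨p, by simp [feasSet, dKT_self]⟩

/-! If `q` ranks `y` above `x` while `p` ranks `x` above `y`, then every `z` with
`p x ≤ p z < p y` yields its own disagreement pair, `(x, z)` or `(z, y)`, so
`d_KT(p, q) ≥ rank p y - rank p x`. Conversely, the left shift `LS p y δ` moves `y` above
`x` and disagrees with `p` only on the at most `δ` pairs that `y` jumps over. -/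

lemma Fin.val_succAbove_eq_ite {n : ℕ} (i : Fin (n + 1)) (s : Fin n) :
    (i.succAbove s : ℕ) = if (s : ℕ) < i then (s : ℕ) else (s : ℕ) + 1 := by
  rcases lt_or_ge (Fin.castSucc s) i with h | h
  · rw [Fin.succAbove_of_castSucc_lt _ _ h, if_pos (show (s : ℕ) < i from h), Fin.val_castSucc]
  · rw [Fin.succAbove_of_le_castSucc _ _ h, if_neg (show ¬(s : ℕ) < i from not_lt.mpr h),
      Fin.val_succ]

lemma val_movePerm {m : ℕ} {i j : Fin m} (hji : j ≤ i) (t : Fin m) :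
    (movePerm i j t : ℕ) =
      if (t : ℕ) = i then (j : ℕ)
      else if (t : ℕ) < j ∨ (i : ℕ) < t then (t : ℕ) else (t : ℕ) + 1 := by
  cases m with
  | zero => exact i.elim0
  | succ n =>
    by_cases hti : t = i
    · subst hti
      simp [movePerm]
    obtain ⟨s, rfl⟩ := Fin.exists_succAbove_eq hti
    have hmove : movePerm i j (i.succAbove s) = j.succAbove s := by simp [movePerm]
    rw [hmove, Fin.val_succAbove_eq_ite, Fin.val_succAbove_eq_ite]
    rw [Fin.le_def] at hji
    split_ifs <;> omega

lemma movePerm_inversion {m : ℕ} {i j s t : Fin m} (hji : j ≤ i) (hst : s < t)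
    (hinv : movePerm i j t < movePerm i j s) : t = i ∧ j ≤ s := by
  rw [Fin.lt_def, val_movePerm hji, val_movePerm hji] at hinv
  rw [Fin.lt_def] at hst
  rw [Fin.le_def] at hji
  rw [Fin.ext_iff, Fin.le_def]
  split_ifs at hinv <;> omega

section

variable {A : Type*} [Fintype A]

lemma LS_apply (p : Pref A) (a : A) (k : ℕ) (z : A) :
    LS p a k z = movePerm (p a) ⟨(p a : ℕ) - k, by omega⟩ (p z) := rfl

lemma dKT_LS_le (p : Pref A) (a : A) (k : ℕ) : dKT p (LS p a k) ≤ k := by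
  have hji : (⟨(p a : ℕ) - k, by omega⟩ : Fin _) ≤ p a := Fin.le_def.mpr (Nat.sub_le _ _)
  have hinv : ∀ z ∈ univ.filter
      (fun z : A × A => prefers p z.1 z.2 ∧ prefers (LS p a k) z.2 z.1),
      z.2 = a ∧ (p z.1 : ℕ) ∈ Ico ((p a : ℕ) - k) (p a) := by
    rintro ⟨z₁, z₂⟩ hz
    simp only [mem_filter, mem_univ, true_and] at hz
    obtain ⟨h₂, h₁⟩ := movePerm_inversion hji hz.1 hz.2
    obtain rfl := p.injective h₂
    exact ⟨rfl, mem_Ico.mpr ⟨h₁, hz.1⟩⟩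
  calc dKT p (LS p a k)
      ≤ #(Ico ((p a : ℕ) - k) (p a)) := by
        refine card_le_card_of_injOn (fun z => (p z.1 : ℕ)) (fun z hz => (hinv z hz).2) ?_
        intro z hz w hw hzw
        exact Prod.ext (p.injective (Fin.ext hzw)) ((hinv z hz).1.trans (hinv w hw).1.symm)
    _ ≤ k := by rw [Nat.card_Ico]; omega

lemma prefers_LS {p : Pref A} {a b : A} {k : ℕ} (hba : prefers p b a)
    (hk : (p a : ℕ) - k ≤ p b) : prefers (LS p a k) a b := by
  have hji : (⟨(p a : ℕ) - k, by omega⟩ : Fin _) ≤ p a := Fin.le_def.mpr (Nat.sub_le _ _)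
  rw [prefers, LS_apply, LS_apply, Fin.lt_def, val_movePerm hji, val_movePerm hji]
  rw [prefers, Fin.lt_def] at hba
  dsimp only
  split_ifs <;> omega

/-- `z ↦ (x, z)` if `q` puts `z` above `x`, and `z ↦ (z, y)` otherwise, injects the
alternatives `z` with `p x ≤ p z < p y` into the pairs on which `p` and `q` disagree. -/
lemma sub_le_dKT_of_prefers {p q : Pref A} {x y : A} (hyx : prefers q y x) :
    (p y : ℕ) - p x ≤ dKT p q := by
  rw [← Fin.card_Ico]
  refine card_le_card_of_injOn
    (fun t => if prefers q (p.symm t) x then (x, p.symm t) else (p.symm t, y)) ?_ ?_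
  · intro t ht
    obtain ⟨z, rfl⟩ := p.surjective t
    obtain ⟨hxz, hzy⟩ := mem_Ico.mp ht
    simp only [Equiv.symm_apply_apply, coe_filter, mem_univ, true_and]
    split_ifs with h
    · refine ⟨lt_of_le_of_ne hxz ?_, h⟩
      intro hx
      simp only at hx
      rw [p.injective hx] at h
      exact lt_irrefl _ h
    · exact ⟨hzy, lt_of_lt_of_le hyx (not_lt.mp h)⟩
  · intro t ht s hs hts
    have hy : ∀ u ∈ (Ico (p x) (p y) : Set _), p.symm u ≠ y := by
      rintro u hu rfl
      simp at hu
    simp only at hts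
    split_ifs at hts with h₁ h₂ h₂ <;> rw [Prod.mk.injEq] at hts
    · exact p.symm.injective hts.2
    · exact absurd hts.2 (hy t ht)
    · exact absurd hts.2.symm (hy s hs)
    · exact p.symm.injective hts.1

end

theorem exists_close_pref_swapping_pair_iff_general {A : Type*} [Fintype A]
    (p : Pref A) (x y : A) (hxy : x ≠ y) (δ : ℕ) :
    (∃ q : Pref A, dKT p q ≤ δ ∧ prefers q y x) ↔
      (prefers p y x ∨ (rank p y : ℤ) - (rank p x : ℤ) ≤ (δ : ℤ)) := by
  constructor
  · rintro ⟨q, hq, hyx⟩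
    have hsub := sub_le_dKT_of_prefers (p := p) hyx
    right
    simp only [rank]
    omega
  · intro h
    by_cases hp : prefers p y x
    · exact ⟨p, (dKT_self p).trans_le (Nat.zero_le δ), hp⟩
    have hxy' : prefers p x y := by
      have hne : (p x : ℕ) ≠ p y := fun h => hxy (p.injective (Fin.ext h))
      rw [prefers, Fin.lt_def] at hp ⊢
      omega
    refine ⟨LS p y δ, dKT_LS_le p y δ, prefers_LS hxy' ?_⟩
    simp only [rank, hp, false_or] at h
    omega

theorem exists_close_pref_swapping_pair_iff {A : Type*} [Fintype A] [DecidableEq A]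
    (p : Pref A) (x y : A) (hxy : x ≠ y) (δ : ℕ) :
    (∃ q : Pref A, dKT p q ≤ δ ∧ prefers q y x) ↔
      (prefers p y x ∨ (rank p y : ℤ) - (rank p x : ℤ) ≤ (δ : ℤ)) :=
  exists_close_pref_swapping_pair_iff_general p x y hxy δ
end

section
/- Let α = (α_1,…,α_m) be a positional scoring vector, let P = (≻_1,…,≻_n) be an n-voter profile over a finite set A of m alternatives, let δ_1,…,δ_n ≥ 0 be integers, let c ∈ A, and for a ∈ A \ {c} let W_a := max over feasible profiles Q of (S_α(Q,a) − S_α(Q,c)). Then there exists a single manipulator preference ≻_M over A such that c has maximum α-score in the (n+1)-voter profile (Q, ≻_M) for every feasible profile Q, if and only if for every t ∈ {2,…,m} the number of alternatives a ∈ A \ {c} with W_a > α_1 − α_t is at most m − t. -/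
/-!
If `c` is to have maximum score against every feasible profile, the manipulator must place each
rival `a` at a position whose score is at most `α (M c) - W a ≤ α₁ - W a`; so the rivals with
`W a > α₁ - α_t` all sit at positions beyond `t`, of which there are `m - t`. Conversely, the
manipulator who ranks `c` first and the other alternatives by increasing `W` succeeds exactly when
these counting bounds hold.
-/

open Finset

section

variable {A : Type*} [Fintype A]

lemma card_filter_le_pref_apply (M : Pref A) (k : ℕ) :
    #{a | k ≤ (M a : ℕ)} = Fintype.card A - k := by
  have hsplit := card_filter_add_card_filter_not (s := univ) (fun a => k ≤ (M a : ℕ))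
  have hlow : #{a | ¬ k ≤ (M a : ℕ)} = min (Fintype.card A) k := by
    rw [← Fin.card_filter_val_lt]
    exact card_equiv M (by simp)
  rw [card_univ] at hsplit
  omega

lemma exists_pref_sorted_by {β : Type*} [LinearOrder β] (f : A → β) :
    ∃ M : Pref A, ∀ a b, M a ≤ M b → f a ≤ f b := by
  set e := Fintype.equivFin A
  refine ⟨e.trans (Tuple.sort (f ∘ e.symm)).symm, fun a b hab => ?_⟩
  simpa using Tuple.monotone_sort (f ∘ e.symm) hab

lemma exists_pref_head_sorted_by [DecidableEq A] {β : Type*} [LinearOrder β] (c : A)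
    (f : A → β) :
    ∃ M : Pref A, (M c : ℕ) = 0 ∧ ∀ a b, a ≠ c → b ≠ c → M a ≤ M b → f a ≤ f b := by
  obtain ⟨M, hM⟩ := exists_pref_sorted_by fun a => if a = c then (⊥ : WithBot β) else f a
  refine ⟨M, ?_, fun a b ha hb hab => by simpa [ha, hb] using hM a b hab⟩
  have hfirst : ∀ a, M c ≤ M a := by
    intro a
    by_contra! hlt
    have ha : a ≠ c := by rintro rfl; exact lt_irrefl _ hlt
    simpa [ha] using hM a c hlt.le
  have := hfirst (M.symm ⟨0, Fintype.card_pos_iff.mpr ⟨c⟩⟩)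
  rw [M.apply_symm_apply, Fin.le_def] at this
  exact Nat.le_zero.mp this

variable [DecidableEq A]

/-- Positions are `0`-based: `α j` is the paper's `α_t` for `t = j + 1`. -/
def rivalsExceeding (α : Fin (Fintype.card A) → ℕ) (W : A → ℤ) (c : A)
    (j : Fin (Fintype.card A)) : Finset A :=
  {a | a ≠ c ∧ (α ⟨0, j.pos⟩ : ℤ) - α j < W a}

variable {α : Fin (Fintype.card A) → ℕ} {W : A → ℤ} {c : A}

lemma card_rivalsExceeding_le_of_stable (hα : Antitone α) {M : Pref A}
    (hM : ∀ a, a ≠ c → W a + α (M a) ≤ α (M c)) (j : Fin (Fintype.card A)) :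
    #(rivalsExceeding α W c j) ≤ Fintype.card A - (j + 1) := by
  refine (card_le_card fun a ha => ?_).trans_eq (card_filter_le_pref_apply M (j + 1))
  simp only [rivalsExceeding, mem_filter, mem_univ, true_and] at ha ⊢
  obtain ⟨hac, hWa⟩ := ha
  by_contra! hlt
  have hMa : α j ≤ α (M a) := hα (Fin.le_def.mpr (by omega))
  have hMc : α (M c) ≤ α ⟨0, j.pos⟩ := hα (Fin.le_def.mpr (Nat.zero_le _))
  have := hM a hac
  omega

lemma exists_stable_of_card_rivalsExceeding_le
    (h : ∀ j : Fin (Fintype.card A), 1 ≤ (j : ℕ) →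
      #(rivalsExceeding α W c j) ≤ Fintype.card A - (j + 1)) :
    ∃ M : Pref A, ∀ a, a ≠ c → W a + α (M a) ≤ α (M c) := by
  obtain ⟨M, hMc, hsorted⟩ := exists_pref_head_sorted_by c W
  refine ⟨M, fun a ha => ?_⟩
  have hMa : 0 < (M a : ℕ) := by
    by_contra! h0
    exact ha (M.injective (Fin.ext (by omega)))
  by_contra! hlt
  -- `M` lists the rivals by increasing `W`, so all `m - M a` of them from `a` on exceed the bound
  have hsub : ({b | (M a : ℕ) ≤ M b} : Finset A) ⊆ rivalsExceeding α W c (M a) := by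
    intro b hb
    simp only [rivalsExceeding, mem_filter, mem_univ, true_and] at hb ⊢
    have hbc : b ≠ c := by rintro rfl; omega
    have hWb : W a ≤ W b := hsorted a b ha hbc (Fin.le_def.mpr hb)
    have hαc : α (M c) = α ⟨0, (M a).pos⟩ := congrArg α (Fin.ext hMc)
    exact ⟨hbc, by omega⟩
  have := (card_le_card hsub).trans (h (M a) hMa)
  rw [card_filter_le_pref_apply] at this
  omega

end

lemma forall_feasible_score_le_iff {A : Type*} [Fintype A] {n : ℕ}
    {α : Fin (Fintype.card A) → ℕ} {P : Fin n → Pref A} {δ : Fin n → ℕ} {c : A} {W : A → ℤ}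
    (hW : ∀ a : A, a ≠ c → IsGreatest {z : ℤ | ∃ Q : Fin n → Pref A,
        (∀ i, dKT (P i) (Q i) ≤ δ i) ∧
        z = (∑ i, (α ((Q i) a) : ℤ)) - ∑ i, (α ((Q i) c) : ℤ)} (W a)) (M : Pref A) :
    (∀ Q : Fin n → Pref A, (∀ i, dKT (P i) (Q i) ≤ δ i) →
      ∀ b : A, (∑ i, (α ((Q i) b) : ℤ)) + (α (M b) : ℤ) ≤
               (∑ i, (α ((Q i) c) : ℤ)) + (α (M c) : ℤ)) ↔
    ∀ a, a ≠ c → W a + α (M a) ≤ α (M c) := by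
  constructor
  · intro hM a ha
    obtain ⟨⟨Q, hQ, hWa⟩, -⟩ := hW a ha
    have := hM Q hQ a
    omega
  · intro hM Q hQ b
    by_cases hb : b = c
    · rw [hb]
    · have hWb := (hW b hb).2 ⟨Q, hQ, rfl⟩
      have := hM b hb
      omega

theorem scoring_stable_manipulation_exists {A : Type*} [Fintype A] [DecidableEq A] {n : ℕ}
    (α : Fin (Fintype.card A) → ℕ) (hα : Antitone α)
    (P : Fin n → Pref A) (δ : Fin n → ℕ) (c : A)
    (W : A → ℤ)
    (hW : ∀ a : A, a ≠ c → IsGreatest {z : ℤ | ∃ Q : Fin n → Pref A,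
        (∀ i, dKT (P i) (Q i) ≤ δ i) ∧
        z = (∑ i, (α ((Q i) a) : ℤ)) - ∑ i, (α ((Q i) c) : ℤ)} (W a)) :
    (∃ M : Pref A, ∀ Q : Fin n → Pref A, (∀ i, dKT (P i) (Q i) ≤ δ i) →
      ∀ b : A, (∑ i, (α ((Q i) b) : ℤ)) + (α (M b) : ℤ) ≤
               (∑ i, (α ((Q i) c) : ℤ)) + (α (M c) : ℤ)) ↔
    (∀ t : ℕ, ∀ ht2 : 2 ≤ t, ∀ htm : t ≤ Fintype.card A,
      (univ.filter (fun a : A => a ≠ c ∧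
        (α ⟨0, Fintype.card_pos_iff.mpr ⟨c⟩⟩ : ℤ) - (α ⟨t - 1, by omega⟩ : ℤ) < W a)).card ≤
      Fintype.card A - t) := by
  simp only [forall_feasible_score_le_iff hW]
  constructor
  · rintro ⟨M, hM⟩ t ht2 htm
    exact (card_rivalsExceeding_le_of_stable hα hM ⟨t - 1, by omega⟩).trans_eq
      (by dsimp only; omega)
  · intro h
    exact exists_stable_of_card_rivalsExceeding_le fun j hj => h (j + 1) (by omega) j.isLt
end

section
/- Let α = (α_1,…,α_m) be a positional scoring vector, let P = (≻_1,…,≻_n) be an n-voter profile over a finite set A of m alternatives, let δ_1,…,δ_n ≥ 0 be integers, let c ∈ A, and let P_M = (≻_{n+1},…,≻_{n+ℓ}) be an ℓ-voter manipulator profile over A. Let P'_M be the manipulator profile obtained from P_M by moving c to the first position of every vote of P_M while keeping the relative order of all other alternatives unchanged. If c has maximum α-score in (Q, P_M) for every feasible profile Q, then c also has maximum α-score in (Q, P'_M) for every feasible profile Q. -/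
open Finset

lemma movePerm_apply_self {m : ℕ} (i j : Fin m) : movePerm i j i = j := by
  cases m with
  | zero => exact i.elim0
  | succ m =>
    simp [movePerm, finSuccEquiv'_at, finSuccEquiv'_symm_none]

lemma movePerm_succAbove {m : ℕ} (i j : Fin (m + 1)) (k : Fin m) :
    movePerm i j (i.succAbove k) = j.succAbove k := by
  simp [movePerm, finSuccEquiv'_succAbove, finSuccEquiv'_symm_some]

lemma succAbove_val_le {m : ℕ} (i : Fin (m + 1)) (k : Fin m) :
    (i.succAbove k : ℕ) ≤ (k : ℕ) + 1 := by
  rw [Fin.succAbove]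
  split <;> simp [Fin.le_def]

lemma movePerm_zero_le {m : ℕ} (i j x : Fin m) (hj : (j : ℕ) = 0) (hx : x ≠ i) :
    (x : ℕ) ≤ (movePerm i j x : ℕ) := by
  cases m with
  | zero => exact i.elim0
  | succ m =>
    have hj0 : j = 0 := Fin.ext hj
    subst hj0
    obtain ⟨k, rfl⟩ := Fin.exists_succAbove_eq hx
    rw [movePerm_succAbove, Fin.zero_succAbove]
    calc (i.succAbove k : ℕ) ≤ (k : ℕ) + 1 := succAbove_val_le _ _
      _ = (k.succ : ℕ) := by simp

lemma LS_top_apply_self {A : Type*} [Fintype A] (p : Pref A) (c : A) :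
    ((LS p c (Fintype.card A)) c : ℕ) = 0 := by
  have h0 : ((p c : ℕ) - Fintype.card A) = 0 := Nat.sub_eq_zero_of_le (le_of_lt (p c).isLt)
  simp only [LS, Equiv.trans_apply]
  rw [movePerm_apply_self]
  simp [h0]

lemma LS_top_apply_ne {A : Type*} [Fintype A] (p : Pref A) (c b : A) (hb : b ≠ c) :
    (p b : ℕ) ≤ ((LS p c (Fintype.card A)) b : ℕ) := by
  have hne : p b ≠ p c := fun hc => hb (p.injective hc)
  simp only [LS, Equiv.trans_apply]
  exact movePerm_zero_le _ _ _ (Nat.sub_eq_zero_of_le (le_of_lt (p c).isLt)) hne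

theorem move_c_to_top_preserves_stable_manipulation {A : Type*} [Fintype A] [DecidableEq A]
    {n l : ℕ}
    (α : Fin (Fintype.card A) → ℕ) (hα : Antitone α)
    (P : Fin n → Pref A) (δ : Fin n → ℕ) (c : A)
    (PM : Fin l → Pref A)
    (h : ∀ Q : Fin n → Pref A, (∀ i, dKT (P i) (Q i) ≤ δ i) →
      ∀ b : A, (∑ i, (α ((Q i) b) : ℤ)) + ∑ j, (α ((PM j) b) : ℤ) ≤
               (∑ i, (α ((Q i) c) : ℤ)) + ∑ j, (α ((PM j) c) : ℤ)) :
    ∀ Q : Fin n → Pref A, (∀ i, dKT (P i) (Q i) ≤ δ i) →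
      ∀ b : A, (∑ i, (α ((Q i) b) : ℤ)) + ∑ j, (α ((LS (PM j) c (Fintype.card A)) b) : ℤ) ≤
               (∑ i, (α ((Q i) c) : ℤ)) + ∑ j, (α ((LS (PM j) c (Fintype.card A)) c) : ℤ) := by
  intro Q hQ b
  by_cases hbc : b = c
  · subst hbc; exact le_refl _
  have key1 : ∑ j, (α ((LS (PM j) c (Fintype.card A)) b) : ℤ) ≤ ∑ j, (α ((PM j) b) : ℤ) := by
    apply Finset.sum_le_sum
    intro j _
    exact_mod_cast hα (show (PM j) b ≤ (LS (PM j) c (Fintype.card A)) b from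
      Fin.le_def.mpr (LS_top_apply_ne (PM j) c b hbc))
  have key2 : ∑ j, (α ((PM j) c) : ℤ) ≤ ∑ j, (α ((LS (PM j) c (Fintype.card A)) c) : ℤ) := by
    apply Finset.sum_le_sum
    intro j _
    exact_mod_cast hα (show (LS (PM j) c (Fintype.card A)) c ≤ (PM j) c from
      Fin.le_def.mpr (by rw [LS_top_apply_self]; exact Nat.zero_le _))
  have h1 := h Q hQ b
  linarith
end

section
/- Let P = (≻_1,…,≻_n) be an n-voter profile over a finite set A of m alternatives, let δ_1,…,δ_n ≥ 0 be integers, let c ∈ A, let 1 ≤ k ≤ m, and for every a ∈ A \ {c} define λ_a := ℓ + min over feasible profiles Q of (S_k(Q,c) − S_k(Q,a)). Let P_M = (≻_{n+1},…,≻_{n+ℓ}) be an ℓ-voter manipulator profile in which every vote ranks c among its top k positions. Then c has maximum k-approval score in the (n+ℓ)-voter profile (Q, P_M) for every feasible profile Q if and only if for every a ∈ A \ {c}, the number of votes of P_M that rank a among their top k positions is at most λ_a. -/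
open Finset

theorem kapproval_stable_manipulation_check {A : Type*} [Fintype A] [DecidableEq A] {n l : ℕ}
    (P : Fin n → Pref A) (δ : Fin n → ℕ) (c : A)
    (k : ℕ) (hk1 : 1 ≤ k) (hkm : k ≤ Fintype.card A)
    (μ : A → ℤ)
    (hμ : ∀ a : A, a ≠ c → IsLeast {z : ℤ | ∃ Q : Fin n → Pref A,
        (∀ i, dKT (P i) (Q i) ≤ δ i) ∧ z = (Sk k Q c : ℤ) - (Sk k Q a : ℤ)} (μ a))
    (PM : Fin l → Pref A) (hPM : ∀ j, ((PM j) c : ℕ) < k) :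
    (∀ Q : Fin n → Pref A, (∀ i, dKT (P i) (Q i) ≤ δ i) →
      ∀ b : A, Sk k Q b + Sk k PM b ≤ Sk k Q c + Sk k PM c) ↔
    (∀ a : A, a ≠ c → (Sk k PM a : ℤ) ≤ (l : ℤ) + μ a) := by
  have hSc : Sk k PM c = l := by
    unfold Sk
    rw [Finset.filter_true_of_mem (fun j _ => hPM j)]
    simp
  constructor
  · intro h a ha
    obtain ⟨⟨Q, hQ, hz⟩, -⟩ := hμ a ha
    have h1 := h Q hQ a
    have h2 : (Sk k Q a : ℤ) + Sk k PM a ≤ Sk k Q c + Sk k PM c := by exact_mod_cast h1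
    rw [hSc] at h2
    linarith
  · intro h Q hQ b
    by_cases hb : b = c
    · subst hb; exact le_refl _
    · have hlb := (hμ b hb).2 ⟨Q, hQ, rfl⟩
      have hb' := h b hb
      have h2 : (Sk k Q b : ℤ) + Sk k PM b ≤ Sk k Q c + Sk k PM c := by
        rw [hSc]; linarith
      exact_mod_cast h2
end

section
/- Let P = (≻_1,…,≻_n) be an n-voter profile over a finite set A of m alternatives, let δ_1,…,δ_n ≥ 0 be integers, let c ∈ A, let 1 ≤ k ≤ m, let ℓ ≥ 1, and for every a ∈ A \ {c} define λ_a := ℓ + min over feasible profiles Q of (S_k(Q,c) − S_k(Q,a)). Then there exists an ℓ-voter manipulator profile P_M over A such that c has maximum k-approval score in the (n+ℓ)-voter profile (Q, P_M) for every feasible profile Q, if and only if λ_a ≥ 0 for every a ∈ A \ {c} and Σ_{a ∈ A\{c}} min(λ_a, ℓ) ≥ ℓ·(k−1). -/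
open Finset

/-!
For a fixed manipulator profile `PM`, choosing for each `a ≠ c` a feasible `Q` that minimises
`S_k(Q,c) - S_k(Q,a)` shows that `c` is a co-winner against every feasible `Q` iff
`S_k(PM,a) ≤ μ a + S_k(PM,c)` for all `a ≠ c`. The score vectors of `l` manipulators are exactly
the vectors with entries at most `l` summing to `l * k`: peel off one top-`k` set at a time,
taking every alternative of maximal remaining multiplicity first. It is then optimal to let all
manipulators approve `c`, and the remaining `l * (k - 1)` approvals fit under the capacities
`min (l + μ a) l` iff these sum to at least `l * (k - 1)`.
-/

section Allocation

variable {A : Type*} [Fintype A]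

theorem Finset.exists_le_sum_eq_of_le_sum {ι : Type*} [DecidableEq ι] (cap : ι → ℕ)
    (s : Finset ι) {N : ℕ} (hN : N ≤ ∑ i ∈ s, cap i) : ∃ f ≤ cap, ∑ i ∈ s, f i = N := by
  induction s using Finset.induction generalizing N with
  | empty => exact ⟨0, fun _ => Nat.zero_le _, by simpa using (hN.antisymm (Nat.zero_le _)).symm⟩
  | insert a s ha ih =>
    rw [sum_insert ha] at hN
    obtain ⟨f, hf, hsum⟩ := ih (N := N - min (cap a) N) (by omega)
    refine ⟨Function.update f a (min (cap a) N), fun i => ?_, ?_⟩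
    · rcases eq_or_ne i a with rfl | hi
      · simp
      · simpa [hi] using hf i
    · rw [sum_insert ha, Function.update_self, sum_update_of_notMem ha, hsum]
      omega

theorem exists_card_eq_full_subset_support {l r : ℕ} {f : A → ℕ} (hf : ∀ a, f a ≤ l + 1)
    (hsum : ∑ a, f a = (l + 1) * r) :
    ∃ T : Finset A, #T = r ∧
      ({a | f a = l + 1} : Finset A) ⊆ T ∧ T ⊆ ({a | f a ≠ 0} : Finset A) := by
  have h_full : #{a | f a = l + 1} ≤ r := by
    refine Nat.le_of_mul_le_mul_left ?_ (Nat.succ_pos l)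
    calc (l + 1) * #{a | f a = l + 1} = ∑ a ∈ {a | f a = l + 1}, f a := by
          rw [sum_congr rfl fun a ha => (mem_filter.mp ha).2, sum_const, smul_eq_mul, mul_comm]
      _ ≤ ∑ a, f a := sum_le_sum_of_subset (subset_univ _)
      _ = (l + 1) * r := hsum
  have h_supp : r ≤ #{a | f a ≠ 0} := by
    refine Nat.le_of_mul_le_mul_left ?_ (Nat.succ_pos l)
    calc (l + 1) * r = ∑ a ∈ {a | f a ≠ 0}, f a := by rw [sum_filter_ne_zero, hsum]
      _ ≤ #{a | f a ≠ 0} • (l + 1) := sum_le_card_nsmul _ _ _ fun a _ => hf a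
      _ = (l + 1) * #{a | f a ≠ 0} := by rw [smul_eq_mul, mul_comm]
  exact (exists_subsuperset_card_eq (monotone_filter_right _ fun _ h => by omega) h_full
    h_supp).imp fun T ⟨h₁, h₂, h₃⟩ => ⟨h₃, h₁, h₂⟩

theorem exists_finsets_card_eq_of_sum_eq_mul [DecidableEq A] {r : ℕ} :
    ∀ {l : ℕ} (f : A → ℕ), (∀ a, f a ≤ l) → ∑ a, f a = l * r →
      ∃ S : Fin l → Finset A, (∀ i, #(S i) = r) ∧ ∀ a, #{i | a ∈ S i} = f a
  | 0, f, hf, _ => ⟨Fin.elim0, fun i => i.elim0, fun a => by simp [Nat.le_zero.mp (hf a)]⟩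
  | l + 1, f, hf, hsum => by
    obtain ⟨T, hTcard, hfull, hsupp⟩ := exists_card_eq_full_subset_support hf hsum
    have hT : ∀ a, (if a ∈ T then 1 else 0) ≤ f a := fun a => by
      split_ifs with ha
      · exact Nat.one_le_iff_ne_zero.mpr (mem_filter.mp (hsupp ha)).2
      · exact Nat.zero_le _
    let f' : A → ℕ := fun a => f a - if a ∈ T then 1 else 0
    have hf' : ∀ a, f' a ≤ l := fun a => by
      by_cases hmax : f a = l + 1
      · simp [f', hfull (mem_filter.mpr ⟨mem_univ a, hmax⟩), hmax]
      · have := hf a; dsimp only [f']; split_ifs <;> omega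
    have hsum' : ∑ a, f' a = l * r := by
      have hsplit : ∑ a, f a = ∑ a, f' a + #T := by
        rw [show #T = ∑ a, if a ∈ T then 1 else 0 by simp, ← sum_add_distrib]
        exact sum_congr rfl fun a _ => (Nat.sub_add_cancel (hT a)).symm
      rw [hsum, hTcard] at hsplit
      linarith
    obtain ⟨S, hScard, hScount⟩ := exists_finsets_card_eq_of_sum_eq_mul f' hf' hsum'
    refine ⟨Fin.cons T S, Fin.cases hTcard hScard, fun a => ?_⟩
    rw [Fin.card_filter_univ_succ']
    simp only [Fin.cons_zero, Fin.cons_succ, hScount, f']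
    have := hT a
    omega

end Allocation

section Profiles

variable {A : Type*} [Fintype A]

theorem card_filter_pref_lt (p : Pref A) {k : ℕ} (hk : k ≤ Fintype.card A) :
    #{a | (p a : ℕ) < k} = k := by
  rw [card_equiv (t := {j : Fin _ | (j : ℕ) < k}) p fun a => by simp, Fin.card_filter_val_lt,
    min_eq_right hk]

theorem Sk_le {n : ℕ} (k : ℕ) (P : Fin n → Pref A) (a : A) : Sk k P a ≤ n :=
  (card_filter_le _ _).trans_eq (card_fin n)

theorem sum_Sk {n k : ℕ} (hk : k ≤ Fintype.card A) (P : Fin n → Pref A) :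
    ∑ a, Sk k P a = n * k :=
  calc ∑ a, Sk k P a = ∑ i, #{a | ((P i) a : ℕ) < k} :=
        sum_card_bipartiteAbove_eq_sum_card_bipartiteBelow fun a i => ((P i) a : ℕ) < k
    _ = n * k := by simp [card_filter_pref_lt _ hk]

theorem exists_pref_forall_lt_card_iff_mem [DecidableEq A] (T : Finset A) :
    ∃ p : Pref A, ∀ a, (p a : ℕ) < #T ↔ a ∈ T := by
  have hT : #T + (Fintype.card A - #T) = Fintype.card A :=
    Nat.add_sub_cancel' (card_le_univ T)
  let eIn : T ≃ Fin #T := Fintype.equivFinOfCardEq (Fintype.card_coe T)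
  let eOut : {a // a ∉ T} ≃ Fin (Fintype.card A - #T) :=
    Fintype.equivFinOfCardEq (by rw [Fintype.card_subtype_compl, Fintype.card_coe])
  refine ⟨(Equiv.sumCompl (· ∈ T)).symm.trans ((eIn.sumCongr eOut).trans
    (finSumFinEquiv.trans (finCongr hT))), fun a => ?_⟩
  by_cases ha : a ∈ T
  · simp [ha, Equiv.sumCompl_symm_apply_of_pos ha, Fin.is_lt]
  · simp [ha, Equiv.sumCompl_symm_apply_of_neg ha]

theorem exists_profile_Sk_eq_iff [DecidableEq A] {k l : ℕ} (hk : k ≤ Fintype.card A)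
    (v : A → ℕ) : (∃ PM : Fin l → Pref A, Sk k PM = v) ↔ (∀ a, v a ≤ l) ∧ ∑ a, v a = l * k := by
  constructor
  · rintro ⟨PM, rfl⟩
    exact ⟨Sk_le k PM, sum_Sk hk PM⟩
  · rintro ⟨hle, hsum⟩
    obtain ⟨S, hScard, hScount⟩ := exists_finsets_card_eq_of_sum_eq_mul v hle hsum
    choose PM hPM using fun i => exists_pref_forall_lt_card_iff_mem (S i)
    refine ⟨PM, funext fun a => ?_⟩
    rw [← hScount a, Sk]
    exact congrArg card (filter_congr fun i _ => hScard i ▸ hPM i a)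

end Profiles

section Manipulation

variable {A : Type*} [Fintype A] {c : A} {k l : ℕ} {μ : A → ℤ}

theorem forall_feasible_le_iff {n : ℕ} {P : Fin n → Pref A} {δ : Fin n → ℕ}
    (hμ : ∀ a : A, a ≠ c → IsLeast {z : ℤ | ∃ Q : Fin n → Pref A,
        (∀ i, dKT (P i) (Q i) ≤ δ i) ∧ z = (Sk k Q c : ℤ) - (Sk k Q a : ℤ)} (μ a))
    (w : A → ℕ) :
    (∀ Q : Fin n → Pref A, (∀ i, dKT (P i) (Q i) ≤ δ i) →
      ∀ b : A, Sk k Q b + w b ≤ Sk k Q c + w c) ↔ ∀ a, a ≠ c → (w a : ℤ) ≤ μ a + w c := by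
  constructor
  · intro h a ha
    obtain ⟨⟨Q, hQ, hμQ⟩, -⟩ := hμ a ha
    have := h Q hQ a
    omega
  · intro h Q hQ b
    rcases eq_or_ne b c with rfl | hb
    · exact le_rfl
    · have := (hμ b hb).2 ⟨Q, hQ, rfl⟩
      have := h b hb
      omega

variable [DecidableEq A]

theorem le_sum_min_of_scores {v : A → ℕ} (hle : ∀ a, v a ≤ l) (hsum : ∑ a, v a = l * k)
    (hv : ∀ a, a ≠ c → (v a : ℤ) ≤ μ a + v c) :
    (∀ a, a ≠ c → 0 ≤ (l : ℤ) + μ a) ∧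
      (l : ℤ) * ((k : ℤ) - 1) ≤ ∑ a ∈ univ.erase c, min ((l : ℤ) + μ a) l := by
  have hvc : (v c : ℤ) ≤ l := by exact_mod_cast hle c
  refine ⟨fun a ha => by linarith [hv a ha, (v a).cast_nonneg (α := ℤ)], ?_⟩
  have hsum' : ∑ a ∈ univ.erase c, (v a : ℤ) = l * k - v c := by
    rw [eq_sub_iff_add_eq, sum_erase_add _ _ (mem_univ c)]
    exact_mod_cast hsum
  calc (l : ℤ) * ((k : ℤ) - 1) ≤ l * k - v c := by linarith
    _ = ∑ a ∈ univ.erase c, (v a : ℤ) := hsum'.symm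
    _ ≤ ∑ a ∈ univ.erase c, min ((l : ℤ) + μ a) l := sum_le_sum fun a ha =>
        le_min (by linarith [hv a (ne_of_mem_erase ha)]) (by exact_mod_cast hle a)

theorem exists_scores_of_le_sum_min (hk : 1 ≤ k) (hμ : ∀ a, a ≠ c → 0 ≤ (l : ℤ) + μ a)
    (hsum : (l : ℤ) * ((k : ℤ) - 1) ≤ ∑ a ∈ univ.erase c, min ((l : ℤ) + μ a) l) :
    ∃ v : A → ℕ, ((∀ a, v a ≤ l) ∧ ∑ a, v a = l * k) ∧ ∀ a, a ≠ c → (v a : ℤ) ≤ μ a + v c := by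
  obtain ⟨k, rfl⟩ := Nat.exists_eq_add_of_le' hk
  let cap : A → ℕ := fun a => (min ((l : ℤ) + μ a) l).toNat
  have hcap : ∀ a, a ≠ c → (cap a : ℤ) = min ((l : ℤ) + μ a) l := fun a ha =>
    Int.toNat_of_nonneg (le_min (hμ a ha) l.cast_nonneg)
  have hcap_le : ∀ a, cap a ≤ l := fun a => Int.toNat_le.mpr (min_le_right _ _)
  have hcap_sum : l * k ≤ ∑ a ∈ univ.erase c, cap a := by
    zify
    rw [sum_congr rfl fun a ha => hcap a (ne_of_mem_erase ha)]
    simpa using hsum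
  obtain ⟨f, hf, hfsum⟩ := exists_le_sum_eq_of_le_sum cap (univ.erase c) hcap_sum
  refine ⟨Function.update f c l, ⟨fun a => ?_, ?_⟩, fun a ha => ?_⟩
  · rcases eq_or_ne a c with rfl | ha
    · simp
    · simpa [ha] using (hf a).trans (hcap_le a)
  · rw [sum_update_of_mem (mem_univ c), sdiff_singleton_eq_erase, hfsum]
    ring
  · have : (f a : ℤ) ≤ cap a := by exact_mod_cast hf a
    simp only [Function.update_of_ne ha, Function.update_self]
    linarith [hcap a ha, min_le_left ((l : ℤ) + μ a) l]

end Manipulation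

theorem kapproval_stable_manipulation_exists_general {A : Type*} [Fintype A] [DecidableEq A] {n : ℕ}
    (P : Fin n → Pref A) (δ : Fin n → ℕ) (c : A)
    (k : ℕ) (hk1 : 1 ≤ k) (hkm : k ≤ Fintype.card A)
    (l : ℕ)
    (μ : A → ℤ)
    (hμ : ∀ a : A, a ≠ c → IsLeast {z : ℤ | ∃ Q : Fin n → Pref A,
        (∀ i, dKT (P i) (Q i) ≤ δ i) ∧ z = (Sk k Q c : ℤ) - (Sk k Q a : ℤ)} (μ a)) :
    (∃ PM : Fin l → Pref A, ∀ Q : Fin n → Pref A, (∀ i, dKT (P i) (Q i) ≤ δ i) →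
      ∀ b : A, Sk k Q b + Sk k PM b ≤ Sk k Q c + Sk k PM c) ↔
    ((∀ a : A, a ≠ c → 0 ≤ (l : ℤ) + μ a) ∧
      (l : ℤ) * ((k : ℤ) - 1) ≤ ∑ a ∈ univ.erase c, min ((l : ℤ) + μ a) (l : ℤ)) :=
  calc _ ↔ ∃ PM : Fin l → Pref A, ∀ a, a ≠ c → (Sk k PM a : ℤ) ≤ μ a + Sk k PM c :=
        exists_congr fun PM => forall_feasible_le_iff hμ (Sk k PM)
    _ ↔ ∃ v : A → ℕ, (∃ PM : Fin l → Pref A, Sk k PM = v) ∧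
          ∀ a, a ≠ c → (v a : ℤ) ≤ μ a + v c :=
        ⟨fun ⟨PM, h⟩ => ⟨_, ⟨PM, rfl⟩, h⟩, fun ⟨_, ⟨PM, hPM⟩, h⟩ => ⟨PM, hPM ▸ h⟩⟩
    _ ↔ _ := by
      simp_rw [exists_profile_Sk_eq_iff hkm]
      exact ⟨fun ⟨_, hv, h⟩ => le_sum_min_of_scores hv.1 hv.2 h,
        fun ⟨h0, hs⟩ => exists_scores_of_le_sum_min hk1 h0 hs⟩

theorem kapproval_stable_manipulation_exists {A : Type*} [Fintype A] [DecidableEq A] {n : ℕ}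
    (P : Fin n → Pref A) (δ : Fin n → ℕ) (c : A)
    (k : ℕ) (hk1 : 1 ≤ k) (hkm : k ≤ Fintype.card A)
    (l : ℕ) (hl : 1 ≤ l)
    (μ : A → ℤ)
    (hμ : ∀ a : A, a ≠ c → IsLeast {z : ℤ | ∃ Q : Fin n → Pref A,
        (∀ i, dKT (P i) (Q i) ≤ δ i) ∧ z = (Sk k Q c : ℤ) - (Sk k Q a : ℤ)} (μ a)) :
    (∃ PM : Fin l → Pref A, ∀ Q : Fin n → Pref A, (∀ i, dKT (P i) (Q i) ≤ δ i) →
      ∀ b : A, Sk k Q b + Sk k PM b ≤ Sk k Q c + Sk k PM c) ↔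
    ((∀ a : A, a ≠ c → 0 ≤ (l : ℤ) + μ a) ∧
      (l : ℤ) * ((k : ℤ) - 1) ≤ ∑ a ∈ univ.erase c, min ((l : ℤ) + μ a) (l : ℤ)) :=
  kapproval_stable_manipulation_exists_general P δ c k hk1 hkm l μ hμ
end

section
/- Let P = (≻_1,…,≻_n) be an n-voter profile over a finite set A of m alternatives, let δ_1,…,δ_n ≥ 0 be integers, let c,a ∈ A be distinct, let k ∈ {1,…,m}, and let s,r ∈ ℕ. For each i ∈ [n] say vote i is of type (i) if there exists ≻' with d_KT(≻_i,≻') ≤ δ_i in which simultaneously c is not among the top k positions and a is among the top k positions; of type (ii) if it is not of type (i) but there exist ≻' with d_KT(≻_i,≻') ≤ δ_i in which c is not among the top k positions and also (a possibly different) ≻'' with d_KT(≻_i,≻'') ≤ δ_i in which a is among the top k positions; of type (iii) if c can be placed outside the top k positions within distance δ_i but a cannot be placed among the top k positions within distance δ_i; of type (iv) if c cannot be placed outside the top k positions within distance δ_i but a can be placed among the top k positions within distance δ_i; and of type (v) if neither is possible within distance δ_i. Let n_1,…,n_5 be the numbers of votes of types (i)–(v) respectively. Then there exists a feasible profile Q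 with S_k(Q,c) ≤ s and S_k(Q,a) ≥ r if and only if there exists an integer ℓ ∈ {0,1,…,n_2} such that n_2 − ℓ + n_4 + n_5 ≤ s and n_1 + (n_2 − ℓ) + n_4 ≥ r. -/
open Finset

/-- In vote `p`, within Kendall–Tau distance `δ`, the alternative `c` can be placed
outside the top `k` positions. -/
def COut {A : Type*} [Fintype A] (p : Pref A) (δ : ℕ) (c : A) (k : ℕ) : Prop :=
  ∃ q : Pref A, dKT p q ≤ δ ∧ ¬ ((q c : ℕ) < k)

/-- In vote `p`, within Kendall–Tau distance `δ`, the alternative `a` can be placed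
among the top `k` positions. -/
def AIn {A : Type*} [Fintype A] (p : Pref A) (δ : ℕ) (a : A) (k : ℕ) : Prop :=
  ∃ q : Pref A, dKT p q ≤ δ ∧ (q a : ℕ) < k

/-- In vote `p`, within Kendall–Tau distance `δ`, simultaneously `c` can be placed outside
the top `k` positions and `a` among the top `k` positions. -/
def BothCA {A : Type*} [Fintype A] (p : Pref A) (δ : ℕ) (c a : A) (k : ℕ) : Prop :=
  ∃ q : Pref A, dKT p q ≤ δ ∧ ¬ ((q c : ℕ) < k) ∧ (q a : ℕ) < k

theorem type_counting_feasible_scores {A : Type*} [Fintype A] [DecidableEq A] {n : ℕ}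
    (P : Fin n → Pref A) (δ : Fin n → ℕ) (c a : A) (hca : c ≠ a)
    (k : ℕ) (hk1 : 1 ≤ k) (hkm : k ≤ Fintype.card A) (s r : ℕ)
    (n₁ n₂ n₃ n₄ n₅ : ℕ)
    (hn₁ : n₁ = Nat.card {i : Fin n // BothCA (P i) (δ i) c a k})
    (hn₂ : n₂ = Nat.card {i : Fin n //
      ¬ BothCA (P i) (δ i) c a k ∧ COut (P i) (δ i) c k ∧ AIn (P i) (δ i) a k})
    (hn₃ : n₃ = Nat.card {i : Fin n // COut (P i) (δ i) c k ∧ ¬ AIn (P i) (δ i) a k})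
    (hn₄ : n₄ = Nat.card {i : Fin n // ¬ COut (P i) (δ i) c k ∧ AIn (P i) (δ i) a k})
    (hn₅ : n₅ = Nat.card {i : Fin n // ¬ COut (P i) (δ i) c k ∧ ¬ AIn (P i) (δ i) a k}) :
    (∃ Q : Fin n → Pref A, (∀ i, dKT (P i) (Q i) ≤ δ i) ∧
      Sk k Q c ≤ s ∧ r ≤ Sk k Q a) ↔
    (∃ t : ℕ, t ≤ n₂ ∧ n₂ - t + n₄ + n₅ ≤ s ∧ r ≤ n₁ + (n₂ - t) + n₄) := by
    classical
  -- abbreviations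
  set B : Fin n → Prop := fun i => BothCA (P i) (δ i) c a k with hB
  set CO : Fin n → Prop := fun i => COut (P i) (δ i) c k with hCO
  set AI : Fin n → Prop := fun i => AIn (P i) (δ i) a k with hAI
  have hBCO : ∀ i, B i → CO i := fun i ⟨q, hd, hc, _⟩ => ⟨q, hd, hc⟩
  have hBAI : ∀ i, B i → AI i := fun i ⟨q, hd, _, ha⟩ => ⟨q, hd, ha⟩
  set S1 : Finset (Fin n) := univ.filter B with hS1
  set S2 : Finset (Fin n) := univ.filter (fun i => ¬ B i ∧ CO i ∧ AI i) with hS2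
  set S4 : Finset (Fin n) := univ.filter (fun i => ¬ CO i ∧ AI i) with hS4
  set S5 : Finset (Fin n) := univ.filter (fun i => ¬ CO i ∧ ¬ AI i) with hS5
  have hcard : ∀ (p : Fin n → Prop), Nat.card {i : Fin n // p i} = (univ.filter p).card := by
    intro p
    rw [Nat.card_eq_fintype_card, Fintype.card_subtype]
  have hn1' : n₁ = S1.card := by rw [hn₁, hcard]
  have hn2' : n₂ = S2.card := by
    rw [hn₂, hcard]
    exact congrArg Finset.card (by ext i; simp only [mem_filter, mem_univ, true_and,
      hS2, hB, hCO, hAI])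
  have hn4' : n₄ = S4.card := by
    rw [hn₄, hcard]
    exact congrArg Finset.card (by ext i; simp only [mem_filter, mem_univ, true_and,
      hS4, hCO, hAI])
  have hn5' : n₅ = S5.card := by
    rw [hn₅, hcard]
    exact congrArg Finset.card (by ext i; simp only [mem_filter, mem_univ, true_and,
      hS5, hCO, hAI])
  constructor
  · rintro ⟨Q, hfeas, hc, ha⟩
    refine ⟨(S2.filter (fun i => ¬ ((Q i c : ℕ) < k))).card, ?_, ?_, ?_⟩
    · rw [hn2']; exact card_le_card (filter_subset _ _)
    · -- score of c bound
      have hsplit : (S2.filter (fun i => ((Q i c : ℕ) < k))).card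
          = n₂ - (S2.filter (fun i => ¬ ((Q i c : ℕ) < k))).card := by
        have := Finset.card_filter_add_card_filter_not
          (s := S2) (p := fun i => ((Q i c : ℕ) < k))
        omega
      have hsub : (S2.filter (fun i => ((Q i c : ℕ) < k))) ∪ S4 ∪ S5
          ⊆ univ.filter (fun i => ((Q i c : ℕ) < k)) := by
        intro i hi
        simp only [mem_union, mem_filter, mem_univ, true_and, hS2, hS4, hS5] at hi ⊢
        rcases hi with (⟨⟨-, -⟩, h⟩ | ⟨hco, -⟩) | ⟨hco, -⟩
        · exact h
        · by_contra hout; exact hco ⟨Q i, hfeas i, hout⟩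
        · by_contra hout; exact hco ⟨Q i, hfeas i, hout⟩
      have hd1 : Disjoint (S2.filter (fun i => ((Q i c : ℕ) < k))) S4 := by
        rw [Finset.disjoint_left]
        intro i hi hi'
        simp only [mem_filter, mem_univ, true_and, hS2, hS4] at hi hi'
        exact hi'.1 hi.1.2.1
      have hd2 : Disjoint ((S2.filter (fun i => ((Q i c : ℕ) < k))) ∪ S4) S5 := by
        rw [Finset.disjoint_left]
        intro i hi hi'
        simp only [mem_union, mem_filter, mem_univ, true_and, hS2, hS4, hS5] at hi hi'
        rcases hi with ⟨h, -⟩ | ⟨-, h⟩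
        · exact hi'.1 h.2.1
        · exact hi'.2 h
      have := card_le_card hsub
      rw [card_union_of_disjoint hd2, card_union_of_disjoint hd1] at this
      calc n₂ - (S2.filter (fun i => ¬ ((Q i c : ℕ) < k))).card + n₄ + n₅
          = (S2.filter (fun i => ((Q i c : ℕ) < k))).card + S4.card + S5.card := by
            rw [hsplit, hn4', hn5']
        _ ≤ (univ.filter (fun i => ((Q i c : ℕ) < k))).card := this
        _ ≤ s := hc
    · -- score of a bound
      have hsplit : (S2.filter (fun i => ((Q i c : ℕ) < k))).card
          = n₂ - (S2.filter (fun i => ¬ ((Q i c : ℕ) < k))).card := by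
        have := Finset.card_filter_add_card_filter_not
          (s := S2) (p := fun i => ((Q i c : ℕ) < k))
        omega
      have hsub : univ.filter (fun i => ((Q i a : ℕ) < k))
          ⊆ S1 ∪ (S2.filter (fun i => ((Q i c : ℕ) < k))) ∪ S4 := by
        intro i hi
        simp only [mem_union, mem_filter, mem_univ, true_and, hS1, hS2, hS4] at hi ⊢
        by_cases hb : B i
        · exact Or.inl (Or.inl hb)
        by_cases hco : CO i
        · have hai : AI i := ⟨Q i, hfeas i, hi⟩
          refine Or.inl (Or.inr ⟨⟨hb, hco, hai⟩, ?_⟩)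
          by_contra hout
          exact hb ⟨Q i, hfeas i, hout, hi⟩
        · exact Or.inr ⟨hco, ⟨Q i, hfeas i, hi⟩⟩
      calc r ≤ Sk k Q a := ha
        _ ≤ (S1 ∪ (S2.filter (fun i => ((Q i c : ℕ) < k))) ∪ S4).card := card_le_card hsub
        _ ≤ S1.card + (S2.filter (fun i => ((Q i c : ℕ) < k))).card + S4.card := by
            exact (card_union_le _ _).trans (by gcongr; exact card_union_le _ _)
        _ = n₁ + (n₂ - (S2.filter (fun i => ¬ ((Q i c : ℕ) < k))).card) + n₄ := by
            rw [hsplit, hn1', hn4']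
  · rintro ⟨t, ht, hs, hr⟩
    obtain ⟨T, hTsub, hTcard⟩ := Finset.exists_subset_card_eq (by omega : t ≤ S2.card)
    have hTS2 : ∀ i ∈ T, ¬ B i ∧ CO i ∧ AI i := by
      intro i hi
      have := hTsub hi
      simpa [hS2] using this
    -- choose the new votes
    have hex : ∀ i : Fin n, ∃ q : Pref A, dKT (P i) q ≤ δ i ∧
        (((q c : ℕ) < k) ↔ ¬ (CO i ∧ (B i ∨ i ∈ T ∨ ¬ AI i))) ∧
        (((q a : ℕ) < k) ↔ (AI i ∧ i ∉ T)) := by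
      intro i
      by_cases hb : B i
      · obtain ⟨q, hd, hcq, haq⟩ := id hb
        have hnT : i ∉ T := fun hiT => (hTS2 i hiT).1 hb
        exact ⟨q, hd,
          iff_of_false hcq (not_not_intro ⟨⟨q, hd, hcq⟩, Or.inl hb⟩),
          iff_of_true haq ⟨⟨q, hd, haq⟩, hnT⟩⟩
      · by_cases hco : CO i
        · by_cases hai : AI i
          · by_cases hiT : i ∈ T
            · obtain ⟨q, hd, hcq⟩ := id hco
              have haq : ¬ ((q a : ℕ) < k) := fun h => hb ⟨q, hd, hcq, h⟩
              exact ⟨q, hd,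
                iff_of_false hcq (not_not_intro ⟨hco, Or.inr (Or.inl hiT)⟩),
                iff_of_false haq (fun h => h.2 hiT)⟩
            · obtain ⟨q, hd, haq⟩ := id hai
              have hcq : ((q c : ℕ) < k) := by
                by_contra hout
                exact hb ⟨q, hd, hout, haq⟩
              refine ⟨q, hd, iff_of_true hcq ?_, iff_of_true haq ⟨hai, hiT⟩⟩
              rintro ⟨-, (h | h | h)⟩
              · exact hb h
              · exact hiT h
              · exact h hai
          · obtain ⟨q, hd, hcq⟩ := id hco
            have haq : ¬ ((q a : ℕ) < k) := fun h => hai ⟨q, hd, h⟩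
            exact ⟨q, hd,
              iff_of_false hcq (not_not_intro ⟨hco, Or.inr (Or.inr hai)⟩),
              iff_of_false haq (fun h => hai h.1)⟩
        · have hnT : i ∉ T := fun hiT => hco (hTS2 i hiT).2.1
          by_cases hai : AI i
          · obtain ⟨q, hd, haq⟩ := id hai
            have hcq : ((q c : ℕ) < k) := by
              by_contra hout
              exact hco ⟨q, hd, hout⟩
            exact ⟨q, hd, iff_of_true hcq (fun h => hco h.1),
              iff_of_true haq ⟨hai, hnT⟩⟩
          · have hcq : ((P i c : ℕ) < k) := by
              by_contra hout
              exact hco ⟨P i, by simp [dKT_self], hout⟩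
            have haq : ¬ ((P i a : ℕ) < k) := fun h => hai ⟨P i, by simp [dKT_self], h⟩
            exact ⟨P i, by simp [dKT_self], iff_of_true hcq (fun h => hco h.1),
              iff_of_false haq (fun h => hai h.1)⟩
    choose Q hQd hQc hQa using hex
    refine ⟨Q, hQd, ?_, ?_⟩
    · have heq : univ.filter (fun i => ((Q i c : ℕ) < k)) = (S2 \ T) ∪ S4 ∪ S5 := by
        ext i
        simp only [mem_filter, mem_union, mem_sdiff, mem_univ, true_and, hS2, hS4, hS5,
          hQc i]
        constructor
        · intro h
          by_cases hco : CO i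
          · by_cases hai : AI i
            · have hb : ¬ B i := fun hb => h ⟨hco, Or.inl hb⟩
              have hnT : i ∉ T := fun hiT => h ⟨hco, Or.inr (Or.inl hiT)⟩
              exact Or.inl (Or.inl ⟨⟨hb, hco, hai⟩, hnT⟩)
            · exact absurd ⟨hco, Or.inr (Or.inr hai)⟩ h
          · by_cases hai : AI i
            · exact Or.inl (Or.inr ⟨hco, hai⟩)
            · exact Or.inr ⟨hco, hai⟩
        · rintro ((⟨⟨hb, hco, hai⟩, hnT⟩ | ⟨hco, -⟩) | ⟨hco, -⟩)
          · rintro ⟨-, (h | h | h)⟩ <;> [exact hb h; exact hnT h; exact h hai]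
          · exact fun h => hco h.1
          · exact fun h => hco h.1
      have hd1 : Disjoint (S2 \ T) S4 := by
        rw [Finset.disjoint_left]
        intro i hi hi'
        simp only [mem_sdiff, mem_filter, mem_univ, true_and, hS2, hS4] at hi hi'
        exact hi'.1 hi.1.2.1
      have hd2 : Disjoint ((S2 \ T) ∪ S4) S5 := by
        rw [Finset.disjoint_left]
        intro i hi hi'
        simp only [mem_union, mem_sdiff, mem_filter, mem_univ, true_and, hS2, hS4, hS5]
          at hi hi'
        rcases hi with ⟨h, -⟩ | ⟨-, h⟩
        · exact hi'.2 h.2.2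
        · exact hi'.2 h
      have hSd : (S2 \ T).card = n₂ - t := by
        rw [card_sdiff_of_subset hTsub, hTcard, hn2']
      show (univ.filter (fun i => ((Q i c : ℕ) < k))).card ≤ s
      rw [heq, card_union_of_disjoint hd2, card_union_of_disjoint hd1, hSd, ← hn4', ← hn5']
      exact hs
    · have heq : univ.filter (fun i => ((Q i a : ℕ) < k)) = S1 ∪ (S2 \ T) ∪ S4 := by
        ext i
        simp only [mem_filter, mem_union, mem_sdiff, mem_univ, true_and, hS1, hS2, hS4,
          hQa i]
        constructor
        · rintro ⟨hai, hnT⟩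
          by_cases hb : B i
          · exact Or.inl (Or.inl hb)
          by_cases hco : CO i
          · exact Or.inl (Or.inr ⟨⟨hb, hco, hai⟩, hnT⟩)
          · exact Or.inr ⟨hco, hai⟩
        · rintro ((hb | ⟨⟨-, -, hai⟩, hnT⟩) | ⟨hco, hai⟩)
          · exact ⟨hBAI i hb, fun hiT => (hTS2 i hiT).1 hb⟩
          · exact ⟨hai, hnT⟩
          · exact ⟨hai, fun hiT => hco (hTS2 i hiT).2.1⟩
      have hd1 : Disjoint S1 (S2 \ T) := by
        rw [Finset.disjoint_left]
        intro i hi hi'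
        simp only [mem_sdiff, mem_filter, mem_univ, true_and, hS1, hS2] at hi hi'
        exact hi'.1.1 hi
      have hd2 : Disjoint (S1 ∪ (S2 \ T)) S4 := by
        rw [Finset.disjoint_left]
        intro i hi hi'
        simp only [mem_union, mem_sdiff, mem_filter, mem_univ, true_and, hS1, hS2, hS4]
          at hi hi'
        rcases hi with hb | ⟨h, -⟩
        · exact hi'.1 (hBCO i hb)
        · exact hi'.1 h.2.1
      have hSd : (S2 \ T).card = n₂ - t := by
        rw [card_sdiff_of_subset hTsub, hTcard, hn2']
      show r ≤ (univ.filter (fun i => ((Q i a : ℕ) < k))).card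
      rw [heq, card_union_of_disjoint hd2, card_union_of_disjoint hd1, hSd, ← hn1', ← hn4']
      exact hr
end

section
/- Let P = (≻_1,…,≻_n) be an n-voter profile over a finite set A of m alternatives, let δ_1,…,δ_n ≥ 0 be integers, and let x,y ∈ A be distinct. Then the minimum of D_Q(x,y) over all feasible profiles Q equals Σ_{i=1}^n v_i, where v_i = −1 if y ≻_i x or rank(≻_i,y) − rank(≻_i,x) ≤ δ_i, and v_i = +1 otherwise. -/
/-!
Each voter contributes `±1` to `D_Q(x, y)` independently of the others, so it suffices to
minimise one voter's sign. A voter with `x ≻ y` can be moved to `y ≻' x` exactly when `δ` covers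
the rank gap: in any such `≻'`, each alternative `z` ranked from `x` down to just above `y` gives a
discordant pair of its own (`{z, y}` if `y ≻' z`, otherwise `{x, z}`), while rotating `y` up into
`x`'s position costs exactly that many swaps.
-/

open Finset

lemma isLeast_sum_of_isLeast {ι β M : Type*} [Fintype ι] [AddCommMonoid M] [PartialOrder M]
    [IsOrderedAddMonoid M] {C : ι → Set β} {f : ι → β → M} {m : ι → M}
    (h : ∀ i, IsLeast (f i '' C i) (m i)) :
    IsLeast {z | ∃ Q : ι → β, (∀ i, Q i ∈ C i) ∧ z = ∑ i, f i (Q i)} (∑ i, m i) := by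
  choose Q hQ hQm using fun i => (h i).1
  refine ⟨⟨Q, hQ, by simp only [hQm]⟩, ?_⟩
  rintro _ ⟨R, hR, rfl⟩
  exact sum_le_sum fun i _ => (h i).2 ⟨R i, hR i, rfl⟩

lemma Fin.val_cycleIcc {n : ℕ} {i j : Fin n} (hij : i ≤ j) (k : Fin n) :
    (Fin.cycleIcc i j k : ℕ) =
      if (k : ℕ) = j then (i : ℕ) else if (i : ℕ) ≤ k ∧ (k : ℕ) < j then k + 1 else k := by
  have : NeZero n := NeZero.of_pos k.pos
  rcases lt_or_ge k i with hki | hik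
  · rw [Fin.cycleIcc_of_lt hki, if_neg (by omega), if_neg (by omega)]
  rcases lt_or_ge j k with hjk | hkj
  · rw [Fin.cycleIcc_of_gt hjk, if_neg (by omega), if_neg (by omega)]
  rcases eq_or_lt_of_le hkj with rfl | hkj
  · rw [Fin.cycleIcc_of_last hij, if_pos rfl]
  · rw [Fin.cycleIcc_of_ge_of_lt hik hkj, Fin.val_add_one_of_lt' (by omega),
      if_neg (by omega), if_pos ⟨hik, hkj⟩]

section Preference

variable {A : Type*} [Fintype A]

lemma prefers_asymm (p : Pref A) {x y : A} (h : prefers p x y) : ¬ prefers p y x :=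
  lt_asymm h

lemma prefers_of_not_prefers (p : Pref A) {x y : A} (hxy : x ≠ y) (h : ¬ prefers p y x) :
    prefers p x y :=
  lt_of_le_of_ne (not_lt.mp h) (p.injective.ne hxy)

def pairSign (p : Pref A) (x y : A) : ℤ := if prefers p y x then -1 else 1

lemma neg_one_le_pairSign (p : Pref A) (x y : A) : -1 ≤ pairSign p x y := by
  unfold pairSign; split_ifs <;> norm_num

lemma margin_eq_sum_pairSign {n : ℕ} (Q : Fin n → Pref A) {x y : A} (hxy : x ≠ y) :
    margin Q x y = ∑ i, pairSign (Q i) x y := by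
  have hbeats : univ.filter (fun i => ¬ prefers (Q i) y x) =
      univ.filter (fun i => prefers (Q i) x y) :=
    filter_congr fun i _ => ⟨prefers_of_not_prefers _ hxy, prefers_asymm _⟩
  simp only [pairSign, sum_ite, sum_const, hbeats, margin, smul_neg, nsmul_eq_mul, mul_one]
  ring

def between (p : Pref A) (a b : A) : Finset A := (Ico (p a) (p b)).map p.symm.toEmbedding

lemma mem_between {p : Pref A} {a b z : A} : z ∈ between p a b ↔ p a ≤ p z ∧ p z < p b := by
  simp [between, mem_map_equiv]

lemma card_between (p : Pref A) (a b : A) : #(between p a b) = (p b : ℕ) - p a := by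
  simp [between]

lemma card_between_le_dKT (p q : Pref A) {x y : A} (hq : prefers q y x) :
    #(between p x y) ≤ dKT p q := by
  classical
  refine card_le_card_of_injOn (fun z => if prefers q y z then (z, y) else (x, z)) ?_ ?_
  · intro z hz
    obtain ⟨hxz, hzy⟩ := mem_between.mp hz
    simp only [coe_filter, mem_univ, true_and, Set.mem_ofPred_eq]
    split_ifs with hyz
    · exact ⟨hzy, hyz⟩
    · have hzx : z ≠ x := by rintro rfl; exact hyz hq
      have hzy' : z ≠ y := by rintro rfl; exact lt_irrefl _ hzy
      have hqz : prefers q z y := prefers_of_not_prefers q hzy' hyz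
      exact ⟨lt_of_le_of_ne hxz (p.injective.ne hzx.symm), lt_trans hqz hq⟩
  · intro z₁ hz₁ z₂ hz₂ h
    have hne : ∀ {z}, z ∈ (between p x y : Set A) → z ≠ y := fun hz h =>
      lt_irrefl _ (h ▸ (mem_between.mp hz).2)
    simp only at h
    split_ifs at h <;> simp only [Prod.mk.injEq] at h
    exacts [h.1, absurd h.2.symm (hne hz₂), absurd h.2 (hne hz₁), h.2]

lemma exists_prefers_dKT_le_card_between (p : Pref A) {x y : A} (h : prefers p x y) :
    ∃ q : Pref A, prefers q y x ∧ dKT p q ≤ #(between p x y) := by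
  classical
  have hle : p x ≤ p y := le_of_lt h
  have hlt : (p x : ℕ) < p y := h
  refine ⟨p.trans (Fin.cycleIcc (p x) (p y)), ?_, ?_⟩
  · change (Fin.cycleIcc (p x) (p y) (p y) : ℕ) < Fin.cycleIcc (p x) (p y) (p x)
    rw [Fin.val_cycleIcc hle, Fin.val_cycleIcc hle]
    split_ifs <;> omega
  · refine le_trans (card_le_card ?_) (card_image_le (f := fun z => (z, y)))
    rintro ⟨a, b⟩ hab
    simp only [mem_filter, mem_univ, true_and, prefers, Fin.lt_def, Equiv.trans_apply,
      Fin.val_cycleIcc hle] at hab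
    have hb : (p b : ℕ) = p y ∧ (p x : ℕ) ≤ p a ∧ (p a : ℕ) < p y := by
      obtain ⟨h₁, h₂⟩ := hab
      split_ifs at h₂ <;> omega
    obtain rfl : b = y := p.injective (Fin.ext hb.1)
    exact mem_image.mpr ⟨a, mem_between.mpr ⟨hb.2.1, hb.2.2⟩, rfl⟩

lemma isLeast_pairSign (p : Pref A) (δ : ℕ) {x y : A} (hxy : x ≠ y) :
    IsLeast ((fun q => pairSign q x y) '' {q | dKT p q ≤ δ})
      (if prefers p y x ∨ (rank p y : ℤ) - (rank p x : ℤ) ≤ (δ : ℤ) then -1 else 1) := by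
  split_ifs with hflip
  · refine ⟨?_, by rintro _ ⟨q, -, rfl⟩; exact neg_one_le_pairSign q x y⟩
    obtain ⟨q, hq, hdist⟩ : ∃ q, prefers q y x ∧ dKT p q ≤ δ := by
      by_cases hyx : prefers p y x
      · exact ⟨p, hyx, by simp [dKT_self]⟩
      · obtain ⟨q, hq, hdist⟩ :=
          exists_prefers_dKT_le_card_between p (prefers_of_not_prefers p hxy hyx)
        have hgap := hflip.resolve_left hyx
        refine ⟨q, hq, hdist.trans ?_⟩
        simp only [rank, card_between, Nat.cast_add] at hgap ⊢
        omega
    exact ⟨q, hdist, if_pos hq⟩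
  · obtain ⟨hyx, hgap⟩ := not_or.mp hflip
    refine ⟨⟨p, by simp [dKT_self], if_neg hyx⟩, ?_⟩
    rintro _ ⟨q, hdist, rfl⟩
    have hlt : (p x : ℕ) < p y := prefers_of_not_prefers p hxy hyx
    have hq : ¬ prefers q y x := fun hq => by
      have hcost := (card_between_le_dKT p q hq).trans hdist
      simp only [rank, card_between, Nat.cast_add] at hgap hcost
      omega
    simp [pairSign, hq]

end Preference

theorem min_feasible_margin_general {A : Type*} [Fintype A] {n : ℕ}
    (P : Fin n → Pref A) (δ : Fin n → ℕ) (x y : A) (hxy : x ≠ y) :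
    IsLeast {z : ℤ | ∃ Q : Fin n → Pref A, (∀ i, dKT (P i) (Q i) ≤ δ i) ∧ z = margin Q x y}
      (∑ i, if prefers (P i) y x ∨ (rank (P i) y : ℤ) - (rank (P i) x : ℤ) ≤ (δ i : ℤ)
            then (-1 : ℤ) else 1) := by
  simp_rw [margin_eq_sum_pairSign _ hxy]
  exact isLeast_sum_of_isLeast fun i => isLeast_pairSign (P i) (δ i) hxy

theorem min_feasible_margin {A : Type*} [Fintype A] [DecidableEq A] {n : ℕ}
    (P : Fin n → Pref A) (δ : Fin n → ℕ) (x y : A) (hxy : x ≠ y) :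
    IsLeast {z : ℤ | ∃ Q : Fin n → Pref A, (∀ i, dKT (P i) (Q i) ≤ δ i) ∧ z = margin Q x y}
      (∑ i, if prefers (P i) y x ∨ (rank (P i) y : ℤ) - (rank (P i) x : ℤ) ≤ (δ i : ℤ)
            then (-1 : ℤ) else 1) :=
  min_feasible_margin_general P δ x y hxy
end
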